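/- arXiv:2210.05981 — 8 statements merged into one kernel-verified Lean document; each statement's English description precedes it below -/
import Mathlib

section
/- (Rudin's Lemma) Let L be a partially ordered set and let ℱ be a directed family of nonempty finite subsets of L, i.e., for all E, F ∈ ℱ there exists H ∈ ℱ with ↑H ⊆ ↑E ∩ ↑F. Then there exists a nonempty directed subset D ⊆ ⋃_{F∈ℱ} F such that D ∩ F ≠ ∅ for every F ∈ ℱ. -/
open Set

universe u v

variable {L : Type u}

/-- The upper set `↑A = {y : ∃ a ∈ A, a ≤ y}`. -/
def upSet [Preorder L] (A : Set L) : Set L := {y | ∃ a ∈ A, a ≤ y}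

/-- The lower set `↓A = {y : ∃ a ∈ A, y ≤ a}`. -/
def downSet [Preorder L] (A : Set L) : Set L := {y | ∃ a ∈ A, y ≤ a}

/-- An ideal on `J`: a family of subsets closed under subsets and finite unions. -/
def IsIdeal {J : Type v} (I : Set (Set J)) : Prop :=
  (∀ A ∈ I, ∀ B : Set J, B ⊆ A → B ∈ I) ∧ ∀ A ∈ I, ∀ B ∈ I, A ∪ B ∈ I

/-- A (nonempty) directed family of nonempty finite subsets of `L`. -/
def DirectedFamily [Preorder L] (𝓕 : Set (Set L)) : Prop :=
  𝓕.Nonempty ∧ (∀ F ∈ 𝓕, F.Nonempty ∧ F.Finite) ∧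
    ∀ E ∈ 𝓕, ∀ F ∈ 𝓕, ∃ H ∈ 𝓕, upSet H ⊆ upSet E ∩ upSet F

/-- A dcpo: every nonempty directed subset has a supremum. -/
def IsDcpo (L : Type u) [PartialOrder L] : Prop :=
  ∀ D : Set L, D.Nonempty → DirectedOn (· ≤ ·) D → ∃ s, IsLUB D s

/-- A net index: a nonempty directed preordered set. -/
def IsNetIndex (J : Type v) [Preorder J] : Prop :=
  Nonempty J ∧ ∀ a b : J, ∃ c, a ≤ c ∧ b ≤ c

/-- The net `xj` GZS-converges (generalized ideal inf-limit) to `x` w.r.t. ideal `I`. -/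
def GZSConv [Preorder L] {J : Type v} (xj : J → L) (I : Set (Set J)) (x : L) : Prop :=
  ∃ 𝓕 : Set (Set L), DirectedFamily 𝓕 ∧ (⋂ F ∈ 𝓕, upSet F) ⊆ upSet {x} ∧
    ∀ F ∈ 𝓕, {j | xj j ∉ upSet F} ∈ I

/-- The net `xj` IS-converges (ideal inf-limit) to `x` w.r.t. ideal `I`. -/
def ISConv [Preorder L] {J : Type v} (xj : J → L) (I : Set (Set J)) (x : L) : Prop :=
  ∃ D : Set L, D.Nonempty ∧ DirectedOn (· ≤ ·) D ∧ (∃ s, IsLUB D s ∧ x ≤ s) ∧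
    ∀ d ∈ D, {j | xj j ∉ upSet {d}} ∈ I

/-- `G ≪ x` for a set `G`: every nonempty directed `D` with `x ≤ sup D` meets `↑G`. -/
def WayBelowSet [Preorder L] (G : Set L) (x : L) : Prop :=
  ∀ D : Set L, D.Nonempty → DirectedOn (· ≤ ·) D →
    ∀ s, IsLUB D s → x ≤ s → (D ∩ upSet G).Nonempty

/-- Scott open set. -/
def ScottOpen [Preorder L] (U : Set L) : Prop :=
  (∀ x ∈ U, ∀ y, x ≤ y → y ∈ U) ∧
    ∀ D : Set L, D.Nonempty → DirectedOn (· ≤ ·) D →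
      ∀ s, IsLUB D s → s ∈ U → (D ∩ U).Nonempty

/-- `fin(x)`: the nonempty finite subsets way below `x`. -/
def finOf [Preorder L] (x : L) : Set (Set L) :=
  {F | F.Nonempty ∧ F.Finite ∧ WayBelowSet F x}

/-- Quasicontinuous domain. -/
def QuasicontinuousDomain (L : Type u) [PartialOrder L] : Prop :=
  IsDcpo L ∧ ∀ x : L, DirectedFamily (finOf x) ∧ upSet {x} = ⋂ F ∈ finOf x, upSet F

/-- Ideal convergence of a net w.r.t. a topology `T`. -/
def IConv [Preorder L] {J : Type v} (T : TopologicalSpace L) (xj : J → L)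
    (I : Set (Set J)) (x : L) : Prop :=
  ∀ U : Set L, T.IsOpen U → x ∈ U → {j | xj j ∉ U} ∈ I

/-- The net `xj` GS-converges (generalized inf-limit) to `x`. -/
def GSConv [Preorder L] {J : Type v} [Preorder J] (xj : J → L) (x : L) : Prop :=
  ∃ 𝓕 : Set (Set L), DirectedFamily 𝓕 ∧ (⋂ F ∈ 𝓕, upSet F) ⊆ upSet {x} ∧
    ∀ F ∈ 𝓕, ∃ k : J, ∀ j : J, k ≤ j → xj j ∈ upSet F

/-- The generalized inf-limit topology `τ^{g-lim-inf}`. -/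
def tauGLimInf (L : Type u) [PartialOrder L] : Set (Set L) :=
  {U | ∀ (J : Type u) [Preorder J], IsNetIndex J →
      ∀ xj : J → L, ∀ x ∈ U, GSConv xj x → ∃ k : J, ∀ j : J, k ≤ j → xj j ∈ U}

/-- The generalized ideal inf-limit topology `τ^{g-I-lim-inf}`. -/
def tauGILimInf (L : Type u) [PartialOrder L] : Set (Set L) :=
  {U | ∀ (J : Type u) [Preorder J], IsNetIndex J →
      ∀ (xj : J → L) (I : Set (Set J)), IsIdeal I →
      ∀ x ∈ U, GZSConv xj I x → {j | xj j ∉ U} ∈ I}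

/-- `x = glim_GZ (x_j)`: generalized ideal eventual-lower-bound limit. -/
def GlimGZ [Preorder L] {J : Type v} (xj : J → L) (I : Set (Set J)) (x : L) : Prop :=
  GZSConv xj I x ∧
    ∀ F : Set L, F.Nonempty → F.Finite → {j | xj j ∉ upSet F} ∈ I → x ∈ upSet F

/-- The generalized ideal eventual-lower-bound limit topology `τ^{g-I}`. -/
def tauGIlb (L : Type u) [PartialOrder L] : Set (Set L) :=
  {U | ∀ (J : Type u) [Preorder J], IsNetIndex J →
      ∀ (xj : J → L) (I : Set (Set J)), IsIdeal I →
      ∀ x ∈ U, GlimGZ xj I x → {j | xj j ∉ U} ∈ I}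

/-- The Scott topology `σ(L)`. -/
def scottTop (L : Type u) [Preorder L] : TopologicalSpace L :=
  TopologicalSpace.generateFrom {U | ScottOpen U}

/-- The Lawson topology `λ(L) = σ(L) ∨ ω(L)`. -/
def lawsonTop (L : Type u) [Preorder L] : TopologicalSpace L :=
  TopologicalSpace.generateFrom ({U | ScottOpen U} ∪ {V | ∃ x : L, V = (upSet {x})ᶜ})

/-- Meet-continuity of a dcpo. -/
def MeetContinuous (L : Type u) [PartialOrder L] : Prop :=
  ∀ x : L, ∀ D : Set L, D.Nonempty → DirectedOn (· ≤ ·) D →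
    ∀ s, IsLUB D s → x ≤ s → x ∈ @closure L (scottTop L) (downSet {x} ∩ downSet D)

/-- Continuous domain: `⇓x` is nonempty, directed, with supremum `x`. -/
def ContinuousDomain (L : Type u) [PartialOrder L] : Prop :=
  IsDcpo L ∧ ∀ x : L, {y : L | WayBelowSet {y} x}.Nonempty ∧
    DirectedOn (· ≤ ·) {y : L | WayBelowSet {y} x} ∧ IsLUB {y : L | WayBelowSet {y} x} x

/-- The intersection of a nonempty chain of sets, each meeting a fixed finite set `F`,
still meets `F`. -/
lemma chain_sInter_inter_finite {α : Type*} {c : Set (Set α)} (hc : IsChain (· ⊆ ·) c)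
    (hne : c.Nonempty) {F : Set α} (hF : F.Finite)
    (h : ∀ A ∈ c, (A ∩ F).Nonempty) : ((⋂₀ c) ∩ F).Nonempty := by
  classical
  set s : Set (Set α) := (fun A => A ∩ F) '' c with hs
  have hsfin : s.Finite := by
    apply Set.Finite.subset hF.finite_subsets
    rintro _ ⟨A, -, rfl⟩
    exact Set.inter_subset_right
  have hsne : s.Nonempty := hne.image _
  obtain ⟨m, hm, hmin⟩ := Set.Finite.exists_minimalFor id s hsfin hsne
  obtain ⟨A₀, hA₀, rfl⟩ := hm
  obtain ⟨x, hxA₀, hxF⟩ := h A₀ hA₀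
  refine ⟨x, ?_, hxF⟩
  rw [Set.mem_sInter]
  intro A hA
  rcases hc.total hA₀ hA with hle | hle
  · exact hle hxA₀
  · have : A ∩ F ⊆ A₀ ∩ F := Set.inter_subset_inter_left _ hle
    have heq : A₀ ∩ F = A ∩ F := le_antisymm (hmin ⟨A, hA, rfl⟩ this) this
    have hx : x ∈ A ∩ F := heq ▸ (⟨hxA₀, hxF⟩ : x ∈ A₀ ∩ F)
    exact hx.1

/-- **Rudin's Lemma.** For a directed family `𝓕` of nonempty finite subsets of a poset `L`,
there is a nonempty directed `D ⊆ ⋃ 𝓕` meeting every member of `𝓕`. -/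
theorem rudin_lemma {L : Type u} [PartialOrder L] (𝓕 : Set (Set L))
    (h𝓕 : DirectedFamily 𝓕) :
    ∃ D : Set L, D ⊆ (⋃ F ∈ 𝓕, F) ∧ D.Nonempty ∧ DirectedOn (· ≤ ·) D ∧
      ∀ F ∈ 𝓕, (D ∩ F).Nonempty := by
    classical
  set U : Set L := ⋃ F ∈ 𝓕, F with hU
  obtain ⟨h𝓕ne, h𝓕fin, h𝓕dir⟩ := h𝓕
  -- The class of "good" subsets
  set P : Set (Set L) :=
    {A | A ⊆ U ∧ (∀ F ∈ 𝓕, (A ∩ F).Nonempty) ∧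
      ∀ F ∈ 𝓕, ∀ x ∈ A, x ∈ upSet F → ∃ f ∈ A ∩ F, f ≤ x} with hP
  have hUP : U ∈ P := by
    refine ⟨le_refl _, ?_, ?_⟩
    · intro F hF
      obtain ⟨y, hy⟩ := (h𝓕fin F hF).1
      exact ⟨y, Set.mem_biUnion hF hy, hy⟩
    · rintro F hF x hx ⟨f, hfF, hfx⟩
      exact ⟨f, ⟨Set.mem_biUnion hF hfF, hfF⟩, hfx⟩
  have hzorn : ∀ c ⊆ P, IsChain (· ⊆ ·) c → c.Nonempty →
      ∃ lb ∈ P, ∀ s ∈ c, lb ⊆ s := by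
    intro c hcP hchain hcne
    refine ⟨⋂₀ c, ⟨?_, ?_, ?_⟩, fun s hs => Set.sInter_subset_of_mem hs⟩
    · obtain ⟨A, hA⟩ := hcne
      exact (Set.sInter_subset_of_mem hA).trans (hcP hA).1
    · intro F hF
      exact chain_sInter_inter_finite hchain hcne (h𝓕fin F hF).2
        (fun A hA => (hcP hA).2.1 F hF)
    · intro F hF x hx hxF
      have key : ((⋂₀ c) ∩ (F ∩ {f | f ≤ x})).Nonempty := by
        refine chain_sInter_inter_finite hchain hcne
          ((h𝓕fin F hF).2.inter_of_left _) ?_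
        intro A hA
        obtain ⟨f, ⟨hfA, hfF⟩, hfx⟩ := (hcP hA).2.2 F hF x (hx A hA) hxF
        exact ⟨f, hfA, hfF, hfx⟩
      obtain ⟨f, hf, hfF, hfx⟩ := key
      exact ⟨f, ⟨hf, hfF⟩, hfx⟩
  obtain ⟨D, -, hDP, hDmin⟩ := zorn_superset_nonempty P hzorn U hUP
  obtain ⟨hDU, hDmeets, hDup⟩ := hDP
  -- Key: for a ∈ D there is F with D ∩ F ⊆ ↑a
  have key : ∀ a ∈ D, ∃ F ∈ 𝓕, ∀ y ∈ D ∩ F, a ≤ y := by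
    intro a ha
    by_contra hcon
    push_neg at hcon
    set D' : Set L := D \ {x | a ≤ x} with hD'
    have hD'sub : D' ⊆ D := Set.diff_subset
    have hD'P : D' ∈ P := by
      refine ⟨hD'sub.trans hDU, ?_, ?_⟩
      · intro F hF
        obtain ⟨y, ⟨hyD, hyF⟩, hya⟩ := hcon F hF
        exact ⟨y, ⟨hyD, hya⟩, hyF⟩
      · intro F hF x hx hxF
        obtain ⟨f, ⟨hfD, hfF⟩, hfx⟩ := hDup F hF x hx.1 hxF
        refine ⟨f, ⟨⟨hfD, fun haf => hx.2 (le_trans haf hfx)⟩, hfF⟩, hfx⟩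
    have := hDmin hD'P hD'sub
    exact (this ha).2 (le_refl a)
  have hdir : DirectedOn (· ≤ ·) D := by
    intro a ha b hb
    obtain ⟨Fa, hFa, hFa'⟩ := key a ha
    obtain ⟨Fb, hFb, hFb'⟩ := key b hb
    obtain ⟨H, hH, hHsub⟩ := h𝓕dir Fa hFa Fb hFb
    obtain ⟨h, hhD, hhH⟩ := hDmeets H hH
    have hhup : h ∈ upSet H := ⟨h, hhH, le_refl h⟩
    obtain ⟨fa, hfaD, hfah⟩ := hDup Fa hFa h hhD (hHsub hhup).1
    obtain ⟨fb, hfbD, hfbh⟩ := hDup Fb hFb h hhD (hHsub hhup).2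
    exact ⟨h, hhD, le_trans (hFa' fa hfaD) hfah, le_trans (hFb' fb hfbD) hfbh⟩
  obtain ⟨F₀, hF₀⟩ := h𝓕ne
  obtain ⟨d, hd, -⟩ := hDmeets F₀ hF₀
  exact ⟨D, hDU, ⟨d, hd⟩, hdir, hDmeets⟩
end

section
/- (Proposition 4) Let L be a dcpo, (x_j)_{j∈J} a net in L, I an ideal on J, and x ∈ L. If (x_j) IS-converges to x with respect to I, then (x_j) GZS-converges to x with respect to I. -/
open Set

universe u v

variable {L : Type u}

/-! A directed set `D` witnessing IS-convergence yields the directed family of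
singletons `{d}`, `d ∈ D`; the intersection of their upper sets is the set of upper bounds of
`D`, which lies above `sup D ≥ x`. -/

section

variable [Preorder L]

@[simp]
theorem upSet_singleton (a : L) : upSet {a} = Ici a := by
  ext y
  simp [upSet]

theorem directedFamily_image_singleton {D : Set L} (hne : D.Nonempty)
    (hD : DirectedOn (· ≤ ·) D) : DirectedFamily ((fun d => ({d} : Set L)) '' D) := by
  refine ⟨hne.image _, ?_, ?_⟩
  · rintro _ ⟨d, -, rfl⟩
    exact ⟨singleton_nonempty d, finite_singleton d⟩
  · rintro _ ⟨d, hd, rfl⟩ _ ⟨e, he, rfl⟩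
    obtain ⟨f, hf, hdf, hef⟩ := hD d hd e he
    refine ⟨{f}, mem_image_of_mem _ hf, ?_⟩
    simp only [upSet_singleton]
    exact subset_inter (Ici_subset_Ici.mpr hdf) (Ici_subset_Ici.mpr hef)

theorem biInter_upSet_image_singleton (D : Set L) :
    ⋂ F ∈ (fun d => ({d} : Set L)) '' D, upSet F = upperBounds D := by
  ext y
  simp [upperBounds]

theorem ISConv.gzsConv {J : Type v} {xj : J → L} {I : Set (Set J)} {x : L}
    (h : ISConv xj I x) : GZSConv xj I x := by
  obtain ⟨D, hne, hD, ⟨s, hs, hxs⟩, hsmall⟩ := h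
  refine ⟨_, directedFamily_image_singleton hne hD, ?_, ?_⟩
  · rw [biInter_upSet_image_singleton, upSet_singleton]
    exact fun y hy => hxs.trans (hs.2 hy)
  · rintro _ ⟨d, hd, rfl⟩
    exact hsmall d hd

end

theorem prop4_general {L : Type u} [PartialOrder L] {J : Type v} [Preorder J]
    (xj : J → L) (I : Set (Set J)) (x : L)
    (h : ISConv xj I x) :
    GZSConv xj I x :=
  h.gzsConv

/-- **Proposition 4.** In a dcpo, IS-convergence implies GZS-convergence. -/
theorem prop4 {L : Type u} [PartialOrder L] (hL : IsDcpo L) {J : Type v} [Preorder J]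
    (hJ : IsNetIndex J) (xj : J → L) (I : Set (Set J)) (hI : IsIdeal I) (x : L)
    (h : ISConv xj I x) :
    GZSConv xj I x :=
  prop4_general xj I x h
end

section
/- (Proposition 6) Let L be a quasicontinuous domain, (x_j)_{j∈J} a net in L, I a nontrivial ideal on J, and x ∈ L. If for every nonempty finite G ⊆ L with G ≪ x one has {j ∈ J : x_j ∉ ↑G} ∈ I, then (x_j) GZS-converges to x with respect to I. -/
open Set

universe u v

variable {L : Type u}

theorem prop6_general {L : Type u} [PartialOrder L] (hL : QuasicontinuousDomain L)
    {J : Type v} [Preorder J] (xj : J → L)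
    (I : Set (Set J)) (x : L)
    (h : ∀ G : Set L, G.Nonempty → G.Finite → WayBelowSet G x →
        {j | xj j ∉ upSet G} ∈ I) :
    GZSConv xj I x := by
  obtain ⟨hdirected, hup_eq⟩ := hL.2 x
  exact ⟨finOf x, hdirected, hup_eq.ge, fun F ⟨hne, hfin, hway⟩ => h F hne hfin hway⟩

/-- **Proposition 6.** In a quasicontinuous domain, if `{j : x_j ∉ ↑G} ∈ I` for every
nonempty finite `G ≪ x`, then the net GZS-converges to `x` w.r.t. the nontrivial ideal `I`. -/
theorem prop6 {L : Type u} [PartialOrder L] (hL : QuasicontinuousDomain L)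
    {J : Type v} [Preorder J] (hJ : IsNetIndex J) (xj : J → L)
    (I : Set (Set J)) (hI : IsIdeal I) (hInt : (Set.univ : Set J) ∉ I) (x : L)
    (h : ∀ G : Set L, G.Nonempty → G.Finite → WayBelowSet G x →
        {j | xj j ∉ upSet G} ∈ I) :
    GZSConv xj I x :=
  prop6_general hL xj I x h
end

section
/- (Proposition 9) Let L be a dcpo and U ⊆ L. Then U ∈ τ^{g-lim-inf} if and only if for every x ∈ U and every directed family ℱ of nonempty finite subsets of L with ⋂_{F∈ℱ} ↑F ⊆ ↑x, there exists F ∈ ℱ with ↑F ⊆ U. -/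
open Set

universe u v

variable {L : Type u}

/-- **Proposition 9.** `U ∈ τ^{g-lim-inf}` iff for every `x ∈ U` and every directed family
`𝓕` with `⋂_{F ∈ 𝓕} ↑F ⊆ ↑x`, some `↑F ⊆ U`. -/
theorem prop9 {L : Type u} [PartialOrder L] (hL : IsDcpo L) (U : Set L) :
    U ∈ tauGLimInf L ↔
      ∀ x ∈ U, ∀ 𝓕 : Set (Set L), DirectedFamily 𝓕 →
        (⋂ F ∈ 𝓕, upSet F) ⊆ upSet {x} → ∃ F ∈ 𝓕, upSet F ⊆ U := by
  constructor
  · intro hU x hx 𝓕 h𝓕 hsub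
    by_contra hcon
    push_neg at hcon
    -- index set: pairs (F, y) with F ∈ 𝓕 and y ∈ ↑F
    let J : Type u := {p : Set L × L // p.1 ∈ 𝓕 ∧ p.2 ∈ upSet p.1}
    letI : Preorder J :=
      { le := fun p q => upSet q.1.1 ⊆ upSet p.1.1
        le_refl := fun _ => subset_rfl
        le_trans := fun _ _ _ hab hbc z hz => hab (hbc hz)
        lt := fun p q => (upSet q.1.1 ⊆ upSet p.1.1) ∧ ¬(upSet p.1.1 ⊆ upSet q.1.1)
        lt_iff_le_not_ge := fun _ _ => Iff.rfl }
    obtain ⟨F0, hF0⟩ := h𝓕.1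
    obtain ⟨f0, hf0⟩ := (h𝓕.2.1 F0 hF0).1
    have hnet : IsNetIndex J := by
      constructor
      · exact ⟨⟨(F0, f0), hF0, ⟨f0, hf0, le_rfl⟩⟩⟩
      · intro a b
        obtain ⟨H, hH, hHsub⟩ := h𝓕.2.2 a.1.1 a.2.1 b.1.1 b.2.1
        obtain ⟨h0, hh0⟩ := (h𝓕.2.1 H hH).1
        refine ⟨⟨(H, h0), hH, ⟨h0, hh0, le_rfl⟩⟩, ?_, ?_⟩
        · exact hHsub.trans inter_subset_left
        · exact hHsub.trans inter_subset_right
    have hconv : GSConv (fun p : J => p.1.2) x := by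
      refine ⟨𝓕, h𝓕, hsub, ?_⟩
      intro F hF
      obtain ⟨f, hf⟩ := (h𝓕.2.1 F hF).1
      refine ⟨⟨(F, f), hF, ⟨f, hf, le_rfl⟩⟩, ?_⟩
      intro j hkj
      exact hkj j.2.2
    obtain ⟨k, hk⟩ := hU J hnet (fun p : J => p.1.2) x hx hconv
    obtain ⟨y, hyF, hyU⟩ := not_subset.1 (hcon k.1.1 k.2.1)
    exact hyU (hk ⟨(k.1.1, y), k.2.1, hyF⟩ (fun _ hz => hz))
  · intro h J _ _ xj x hx hconv
    obtain ⟨𝓕, h𝓕, hsub, hev⟩ := hconv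
    obtain ⟨F, hF, hFU⟩ := h x hx 𝓕 h𝓕 hsub
    obtain ⟨k, hk⟩ := hev F hF
    exact ⟨k, fun j hj => hFU (hk j hj)⟩
end

section
/- (Proposition 10) Let L be a dcpo. Then τ^{g-lim-inf} = τ^{g-I-lim-inf}. -/
/-!
Both topologies are defined by convergence conditions, and each kind of convergence can be
simulated by the other. A net that GS-converges along a directed set `J` GZS-converges with
respect to the ideal of sets that the net eventually leaves. Conversely, given an ideal `I`
on `J` not containing `J` itself, reindex the net by the pairs `(j, A)` with `A ∈ I` and
`j ∉ A`, ordered by inclusion of `A`: a set lies in `I` exactly when the reindexed net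
eventually avoids it, so GZS-convergence w.r.t. `I` becomes GS-convergence. If `J ∈ I`, the
ideal contains every subset and the condition is void.
-/

open Set

universe u v

variable {L : Type u}

def tailIdeal (J : Type v) [Preorder J] : Set (Set J) :=
  {A | ∃ k : J, ∀ j, k ≤ j → j ∉ A}

theorem isIdeal_tailIdeal {J : Type v} [Preorder J] (hJ : ∀ a b : J, ∃ c, a ≤ c ∧ b ≤ c) :
    IsIdeal (tailIdeal J) := by
  constructor
  · rintro A ⟨k, hk⟩ B hBA
    exact ⟨k, fun j hj hjB => hk j hj (hBA hjB)⟩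
  · rintro A ⟨k, hk⟩ B ⟨k', hk'⟩
    obtain ⟨c, hkc, hk'c⟩ := hJ k k'
    exact ⟨c, fun j hj => not_or.2 ⟨hk j (hkc.trans hj), hk' j (hk'c.trans hj)⟩⟩

theorem GSConv.gzsConv_tailIdeal {L : Type u} [Preorder L] {J : Type v} [Preorder J]
    {xj : J → L} {x : L} (h : GSConv xj x) : GZSConv xj (tailIdeal J) x := by
  obtain ⟨𝓕, h𝓕, hsub, hev⟩ := h
  refine ⟨𝓕, h𝓕, hsub, fun F hF => ?_⟩
  obtain ⟨k, hk⟩ := hev F hF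
  exact ⟨k, fun j hj hjF => hjF (hk j hj)⟩

theorem tauGILimInf_subset_tauGLimInf (L : Type u) [PartialOrder L] :
    tauGILimInf L ⊆ tauGLimInf L := by
  intro U hU J _ hJ xj x hxU hconv
  obtain ⟨k, hk⟩ :=
    hU J hJ xj (tailIdeal J) (isIdeal_tailIdeal hJ.2) x hxU hconv.gzsConv_tailIdeal
  exact ⟨k, fun j hj => not_not.1 (hk j hj)⟩

theorem exists_notMem_of_univ_notMem {J : Type v} {I : Set (Set J)} (huniv : univ ∉ I)
    {A : Set J} (hA : A ∈ I) : ∃ j, j ∉ A :=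
  (ne_univ_iff_exists_notMem A).1 fun h => huniv (h ▸ hA)

structure IdealIndex (J : Type v) (I : Set (Set J)) : Type v where
  point : J
  null : Set J
  null_mem : null ∈ I
  point_notMem : point ∉ null

namespace IdealIndex

variable {J : Type v} {I : Set (Set J)}

instance : Preorder (IdealIndex J I) where
  le p q := p.null ⊆ q.null
  le_refl p := subset_refl p.null
  le_trans _ _ _ := Subset.trans

theorem le_def {p q : IdealIndex J I} : p ≤ q ↔ p.null ⊆ q.null := Iff.rfl

theorem isNetIndex (hI : IsIdeal I) (huniv : univ ∉ I) (hne : I.Nonempty) :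
    IsNetIndex (IdealIndex J I) := by
  obtain ⟨A, hA⟩ := hne
  obtain ⟨j, hj⟩ := exists_notMem_of_univ_notMem huniv hA
  refine ⟨⟨⟨j, A, hA, hj⟩⟩, fun p q => ?_⟩
  have hpq : p.null ∪ q.null ∈ I := hI.2 _ p.null_mem _ q.null_mem
  obtain ⟨j', hj'⟩ := exists_notMem_of_univ_notMem huniv hpq
  exact ⟨⟨j', _, hpq, hj'⟩, subset_union_left, subset_union_right⟩

theorem eventually_point_notMem (huniv : univ ∉ I) {A : Set J} (hA : A ∈ I) :
    ∃ k : IdealIndex J I, ∀ p, k ≤ p → p.point ∉ A := by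
  obtain ⟨j, hj⟩ := exists_notMem_of_univ_notMem huniv hA
  exact ⟨⟨j, A, hA, hj⟩, fun p hp hpA => p.point_notMem (hp hpA)⟩

theorem mem_of_eventually_point_notMem (hI : IsIdeal I) {S : Set J}
    (h : ∃ k : IdealIndex J I, ∀ p, k ≤ p → p.point ∉ S) : S ∈ I := by
  obtain ⟨k, hk⟩ := h
  refine hI.1 k.null k.null_mem S fun j hjS => ?_
  by_contra hj
  exact hk ⟨j, k.null, k.null_mem, hj⟩ (le_def.2 subset_rfl) hjS

end IdealIndex

theorem GZSConv.gsConv_point {L : Type u} [Preorder L] {J : Type v} {xj : J → L}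
    {I : Set (Set J)} {x : L} (h : GZSConv xj I x) (huniv : univ ∉ I) :
    GSConv (fun p : IdealIndex J I => xj p.point) x := by
  obtain ⟨𝓕, h𝓕, hsub, hnull⟩ := h
  refine ⟨𝓕, h𝓕, hsub, fun F hF => ?_⟩
  obtain ⟨k, hk⟩ := IdealIndex.eventually_point_notMem huniv (hnull F hF)
  exact ⟨k, fun p hp => not_not.1 (hk p hp)⟩

theorem tauGLimInf_subset_tauGILimInf (L : Type u) [PartialOrder L] :
    tauGLimInf L ⊆ tauGILimInf L := by
  intro U hU J _ _ xj I hI x hxU hconv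
  by_cases huniv : univ ∈ I
  · exact hI.1 univ huniv _ (subset_univ _)
  have hIne : I.Nonempty := by
    obtain ⟨𝓕, ⟨⟨F, hF⟩, -⟩, -, hnull⟩ := hconv
    exact ⟨_, hnull F hF⟩
  have hnet := IdealIndex.isNetIndex hI huniv hIne
  obtain ⟨k, hk⟩ := hU _ hnet _ x hxU (hconv.gsConv_point huniv)
  exact IdealIndex.mem_of_eventually_point_notMem hI ⟨k, fun p hp hpU => hpU (hk p hp)⟩

theorem prop10_general {L : Type u} [PartialOrder L] :
    tauGLimInf L = tauGILimInf L :=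
  (tauGLimInf_subset_tauGILimInf L).antisymm (tauGILimInf_subset_tauGLimInf L)

/-- **Proposition 10.** `τ^{g-lim-inf} = τ^{g-I-lim-inf}` on a dcpo. -/
theorem prop10 {L : Type u} [PartialOrder L] (hL : IsDcpo L) :
    tauGLimInf L = tauGILimInf L :=
  prop10_general
end

section
/- (Theorem 1) Let L be a dcpo. Then τ^{g-I-lim-inf} coincides with the Scott topology σ(L): a set U ⊆ L belongs to τ^{g-I-lim-inf} if and only if U is Scott open. -/
open Set

universe u v

variable {L : Type u}

/-- Rudin-style key lemma: if `⋂ upSet F ⊆ upSet {x}` for a directed family and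
`U` is Scott open containing `x`, then some `upSet F ⊆ U`. -/
theorem key {L : Type u} [PartialOrder L] (hL : IsDcpo L) {U : Set L}
    (hU : ScottOpen U) {𝓕 : Set (Set L)} (hDF : DirectedFamily 𝓕) {x : L}
    (hx : x ∈ U) (hsub : (⋂ F ∈ 𝓕, upSet F) ⊆ upSet {x}) :
    ∃ F ∈ 𝓕, upSet F ⊆ U := by
  by_contra hcon
  push_neg at hcon
  obtain ⟨hne, hfin, hdir⟩ := hDF
  -- every F meets Uᶜ
  have hmeet : ∀ F ∈ 𝓕, (Uᶜ ∩ F).Nonempty := by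
    intro F hF
    obtain ⟨y, hy, hyU⟩ := not_subset.mp (hcon F hF)
    obtain ⟨a, haF, hay⟩ := hy
    refine ⟨a, fun haU => hyU (hU.1 a haU y hay), haF⟩
  -- Zorn: minimal lower subset of Uᶜ meeting every F
  set S : Set (Set L) := {A | A ⊆ Uᶜ ∧ (∀ a ∈ A, ∀ b, b ≤ a → b ∈ A) ∧
      ∀ F ∈ 𝓕, (A ∩ F).Nonempty} with hS
  have hCS : Uᶜ ∈ S := by
    refine ⟨Subset.rfl, fun a ha b hba hbU => ha (hU.1 b hbU a hba), ?_⟩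
    intro F hF; exact hmeet F hF
  have hchains : ∀ c ⊆ S, IsChain (· ⊆ ·) c → c.Nonempty → ∃ lb ∈ S, ∀ s ∈ c, lb ⊆ s := by
    intro c hcS hchain hcne
    refine ⟨⋂₀ c, ⟨?_, ?_, ?_⟩, fun s hs => sInter_subset_of_mem hs⟩
    · obtain ⟨A, hA⟩ := hcne
      exact (sInter_subset_of_mem hA).trans (hcS hA).1
    · intro a ha b hba A hA
      exact (hcS hA).2.1 a (ha A hA) b hba
    · intro F hF
      -- finitely many values of A ∩ F over the chain
      have hTfin : ((fun A => A ∩ F) '' c).Finite :=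
        Set.Finite.subset (hfin F hF).2.finite_subsets (by rintro _ ⟨A, -, rfl⟩; exact inter_subset_right)
      have hTne : ((fun A => A ∩ F) '' c).Nonempty := hcne.image _
      obtain ⟨m, hm, hmmin⟩ := Set.Finite.exists_minimalFor id _ hTfin hTne
      obtain ⟨A₀, hA₀c, rfl⟩ := hm
      have hmin' : ∀ A ∈ c, A₀ ∩ F ⊆ A ∩ F := by
        intro A hAc
        rcases hchain.total hA₀c hAc with h | h
        · exact inter_subset_inter_left F h
        · have := hmmin (j := A ∩ F) ⟨A, hAc, rfl⟩ (inter_subset_inter_left F h)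
          simp only [id] at this
          exact this
      obtain ⟨a, haA₀, haF⟩ := (hcS hA₀c).2.2 F hF
      exact ⟨a, fun A hA => ((hmin' A hA) ⟨haA₀, haF⟩).1, haF⟩
  obtain ⟨M, -, hMmin⟩ := zorn_superset_nonempty S hchains _ hCS
  -- M is directed
  obtain ⟨hMC, hMlow, hMmeet⟩ := hMmin.1
  have hMdir : DirectedOn (· ≤ ·) M := by
    intro a ha b hb
    by_contra hnab
    push_neg at hnab
    -- removing the part above a must break S-membership
    have hkey : ∀ z ∈ M, ∃ Fz ∈ 𝓕, M ∩ Fz ⊆ {w | z ≤ w} := by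
      intro z hz
      by_contra hno
      push_neg at hno
      have hsub' : (M \ {w | z ≤ w}) ∈ S := by
        refine ⟨(diff_subset).trans hMC, ?_, ?_⟩
        · intro p hp q hqp
          exact ⟨hMlow p hp.1 q hqp, fun hzq => hp.2 (le_trans hzq hqp)⟩
        · intro F hF
          obtain ⟨w, ⟨hwM, hwF⟩, hnzw⟩ := not_subset.mp (hno F hF)
          exact ⟨w, ⟨hwM, hnzw⟩, hwF⟩
      have := hMmin.2 hsub' diff_subset
      have hzin : z ∈ M \ {w | z ≤ w} := this.ge hz
      exact hzin.2 le_rfl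
    obtain ⟨Fa, hFa, hFa'⟩ := hkey a ha
    obtain ⟨Fb, hFb, hFb'⟩ := hkey b hb
    obtain ⟨H, hH, hHsub⟩ := hdir Fa hFa Fb hFb
    obtain ⟨c, hcM, hcH⟩ := hMmeet H hH
    have hcup : c ∈ upSet H := ⟨c, hcH, le_rfl⟩
    obtain ⟨fa, hfa, hfac⟩ := (hHsub hcup).1
    obtain ⟨fb, hfb, hfbc⟩ := (hHsub hcup).2
    have hfaM : fa ∈ M := hMlow c hcM fa hfac
    have hfbM : fb ∈ M := hMlow c hcM fb hfbc
    have hac : a ≤ c := le_trans (hFa' ⟨hfaM, hfa⟩) hfac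
    have hbc : b ≤ c := le_trans (hFb' ⟨hfbM, hfb⟩) hfbc
    exact hnab c hcM hac hbc
  -- sup of M lies in every upSet F, hence above x, hence in U; contradiction
  obtain ⟨F₀, hF₀⟩ := hne
  have hMne : M.Nonempty := (hMmeet F₀ hF₀).imp fun a => And.left
  obtain ⟨s, hs⟩ := hL M hMne hMdir
  have hsx : s ∈ upSet {x} := by
    apply hsub
    simp only [mem_iInter]
    intro F hF
    obtain ⟨m, hmM, hmF⟩ := hMmeet F hF
    exact ⟨m, hmF, hs.1 hmM⟩
  obtain ⟨x', hx', hxs⟩ := hsx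
  rw [mem_singleton_iff] at hx'
  have hsU : s ∈ U := hU.1 x hx s (hx' ▸ hxs)
  obtain ⟨m, hmM, hmU⟩ := hU.2 M hMne hMdir s hs hsU
  exact hMC hmM hmU

/-- **Theorem 1.** On a dcpo, `τ^{g-I-lim-inf}` coincides with the Scott topology. -/
theorem thm1 {L : Type u} [PartialOrder L] (hL : IsDcpo L) (U : Set L) :
    U ∈ tauGILimInf L ↔ ScottOpen U := by
  constructor
  · intro hU
    constructor
    · -- upper set
      intro x hx y hxy
      have hNI : IsNetIndex (PUnit.{u+1}) := ⟨⟨PUnit.unit⟩, fun a b => ⟨PUnit.unit, le_refl _, le_refl _⟩⟩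
      have hI : IsIdeal ({(∅ : Set PUnit.{u+1})}) := by
        constructor
        · intro A hA B hB
          rw [mem_singleton_iff] at hA ⊢
          subst hA; exact subset_empty_iff.mp hB
        · intro A hA B hB
          rw [mem_singleton_iff] at hA hB ⊢
          subst hA; subst hB; simp
      have hconv : GZSConv (fun _ : PUnit.{u+1} => y) {(∅ : Set PUnit.{u+1})} x := by
        refine ⟨{{x}}, ⟨⟨{x}, rfl⟩, ?_, ?_⟩, ?_, ?_⟩
        · intro F hF; rw [mem_singleton_iff] at hF; subst hF
          exact ⟨singleton_nonempty x, finite_singleton x⟩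
        · intro E hE F hF
          rw [mem_singleton_iff] at hE hF; subst hE; subst hF
          exact ⟨{x}, rfl, fun z hz => ⟨hz, hz⟩⟩
        · intro z hz
          simp only [mem_iInter] at hz
          exact hz {x} rfl
        · intro F hF
          rw [mem_singleton_iff] at hF; subst hF
          rw [mem_singleton_iff, eq_empty_iff_forall_notMem]
          intro j hj
          exact hj ⟨x, mem_singleton x, hxy⟩
      have := hU PUnit.{u+1} hNI (fun _ => y) _ hI x hx hconv
      rw [mem_singleton_iff, eq_empty_iff_forall_notMem] at this
      by_contra hyU
      exact this PUnit.unit hyU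
    · -- inaccessible by directed sups
      intro D hDne hDdir s hs hsU
      haveI : Nonempty D := hDne.to_subtype
      set J := {d // d ∈ D}
      have hNI : IsNetIndex J := by
        refine ⟨inferInstance, ?_⟩
        rintro ⟨a, ha⟩ ⟨b, hb⟩
        obtain ⟨c, hc, hac, hbc⟩ := hDdir a ha b hb
        exact ⟨⟨c, hc⟩, hac, hbc⟩
      set I : Set (Set J) := {A | ∃ k : J, A ⊆ {j | ¬ k ≤ j}} with hIdef
      have hI : IsIdeal I := by
        constructor
        · rintro A ⟨k, hk⟩ B hBA
          exact ⟨k, hBA.trans hk⟩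
        · rintro A ⟨k₁, hk₁⟩ B ⟨k₂, hk₂⟩
          obtain ⟨k, hk₁k, hk₂k⟩ := hNI.2 k₁ k₂
          refine ⟨k, ?_⟩
          rintro j (hj | hj) hkj
          · exact hk₁ hj (le_trans hk₁k hkj)
          · exact hk₂ hj (le_trans hk₂k hkj)
      have hconv : GZSConv (fun j : J => (j : L)) I s := by
        refine ⟨(fun d => ({d} : Set L)) '' D, ⟨hDne.image _, ?_, ?_⟩, ?_, ?_⟩
        · rintro F ⟨d, hd, rfl⟩
          exact ⟨singleton_nonempty d, finite_singleton d⟩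
        · rintro E ⟨d₁, hd₁, rfl⟩ F ⟨d₂, hd₂, rfl⟩
          obtain ⟨d₃, hd₃, h₁₃, h₂₃⟩ := hDdir d₁ hd₁ d₂ hd₂
          refine ⟨{d₃}, ⟨d₃, hd₃, rfl⟩, ?_⟩
          rintro z ⟨a, ha, haz⟩
          rw [mem_singleton_iff] at ha; subst ha
          exact ⟨⟨d₁, mem_singleton d₁, le_trans h₁₃ haz⟩, ⟨d₂, mem_singleton d₂, le_trans h₂₃ haz⟩⟩
        · intro z hz
          simp only [mem_iInter] at hz
          refine ⟨s, mem_singleton s, hs.2 ?_⟩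
          intro d hd
          obtain ⟨a, ha, haz⟩ := hz {d} ⟨d, hd, rfl⟩
          rw [mem_singleton_iff] at ha; subst ha
          exact haz
        · rintro F ⟨d, hd, rfl⟩
          refine ⟨⟨d, hd⟩, ?_⟩
          intro j hj hdj
          exact hj ⟨d, mem_singleton d, hdj⟩
      have hres := hU J hNI (fun j : J => (j : L)) I hI s hsU hconv
      obtain ⟨k, hk⟩ := hres
      by_contra hem
      rw [not_nonempty_iff_eq_empty] at hem
      have : (k : L) ∉ U := by
        intro hkU
        exact eq_empty_iff_forall_notMem.mp hem (k : L) ⟨k.2, hkU⟩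
      exact hk this (le_refl k)
  · -- Scott open → tauGILimInf
    intro hU J _ hNI xj I hI x hx hconv
    obtain ⟨𝓕, hDF, hsub, hIF⟩ := hconv
    obtain ⟨F, hF, hFU⟩ := key hL hU hDF hx hsub
    exact hI.1 _ (hIF F hF) _ (fun j hj => fun hjF => hj (hFU hjF))
end

section
/- (Theorem 2, necessity) Let L be a dcpo. Suppose there exists a topology τ on L such that for every nonempty directed preordered set J, every ideal I on J, every net (x_j)_{j∈J} in L, and every x ∈ L: (x_j) GZS-converges to x with respect to I if and only if (x_j) I-converges to x in τ. Then L is a quasicontinuous domain. -/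
open Set

universe u v

variable {L : Type u}

section AuxLemmas

variable {L : Type u} [PartialOrder L]

lemma upSet_mono' {A : Set L} {y z : L} (hy : y ∈ upSet A) (hyz : y ≤ z) : z ∈ upSet A := by
  obtain ⟨a, ha, hay⟩ := hy; exact ⟨a, ha, hay.trans hyz⟩

lemma self_mem_upSet {A : Set L} {y : L} (hy : y ∈ A) : y ∈ upSet A := ⟨y, hy, le_rfl⟩

/-- The "eventually" ideal on a preordered index type. -/
def evIdeal (J : Type v) [Preorder J] : Set (Set J) := {A | ∃ k : J, ∀ j ∈ A, ¬ k ≤ j}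

lemma evIdeal_isIdeal {J : Type v} [Preorder J] (hJ : IsNetIndex J) : IsIdeal (evIdeal J) := by
  constructor
  · rintro A ⟨k, hk⟩ B hBA
    exact ⟨k, fun j hj => hk j (hBA hj)⟩
  · rintro A ⟨k₁, h₁⟩ B ⟨k₂, h₂⟩
    obtain ⟨k, hk₁, hk₂⟩ := hJ.2 k₁ k₂
    refine ⟨k, fun j hj hkj => ?_⟩
    rcases hj with hj | hj
    · exact h₁ j hj (hk₁.trans hkj)
    · exact h₂ j hj (hk₂.trans hkj)

/-- **Rudin's Lemma**: a directed family of nonempty finite sets admits a directed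
transversal-like set meeting every member. -/
lemma rudin_lemma_s12 (𝒢 : Set (Set L)) (hne : 𝒢.Nonempty)
    (hfin : ∀ G ∈ 𝒢, G.Nonempty ∧ G.Finite)
    (hdir : ∀ E ∈ 𝒢, ∀ F ∈ 𝒢, ∃ H ∈ 𝒢, upSet H ⊆ upSet E ∩ upSet F) :
    ∃ D : Set L, D.Nonempty ∧ DirectedOn (· ≤ ·) D ∧ D ⊆ ⋃₀ 𝒢 ∧
      ∀ G ∈ 𝒢, (D ∩ G).Nonempty := by
  classical
  set E : Set L := ⋃₀ 𝒢 with hEdef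
  set S : Set (Set L) := {A | A ⊆ E ∧ (∀ G ∈ 𝒢, (A ∩ G).Nonempty) ∧
      ∀ a ∈ A, ∀ g ∈ E, g ≤ a → g ∈ A} with hSdef
  have hES : E ∈ S := by
    refine ⟨subset_rfl, fun G hG => ?_, fun a _ g hg _ => hg⟩
    obtain ⟨y, hy⟩ := (hfin G hG).1
    exact ⟨y, ⟨G, hG, hy⟩, hy⟩
  -- Zorn: a minimal adequate down-closed set
  obtain ⟨M, hM⟩ : ∃ M, Minimal (· ∈ S) M := by
    apply zorn_superset
    intro c hcS hchain
    rcases c.eq_empty_or_nonempty with rfl | hcne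
    · exact ⟨E, hES, by simp⟩
    refine ⟨⋂₀ c, ⟨?_, ?_, ?_⟩, fun s hs => Set.sInter_subset_of_mem hs⟩
    · obtain ⟨A, hA⟩ := hcne
      exact (Set.sInter_subset_of_mem hA).trans (hcS hA).1
    · intro G hG
      -- the traces A ∩ G form a finite chain of nonempty sets
      set V : Set (Set L) := (fun A => A ∩ G) '' c with hVdef
      have hVfin : V.Finite := by
        apply Set.Finite.subset ((hfin G hG).2.finite_subsets)
        rintro _ ⟨A, _, rfl⟩; exact Set.inter_subset_right
      have hVne : V.Nonempty := hcne.image _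
      obtain ⟨v, hvV, hvmin⟩ := Set.Finite.exists_minimalFor id V hVfin hVne
      have hvleast : ∀ w ∈ V, v ⊆ w := by
        rintro _ ⟨A, hA, rfl⟩
        obtain ⟨A₀, hA₀, rfl⟩ := hvV
        rcases eq_or_ne A₀ A with rfl | hne'
        · exact subset_rfl
        rcases hchain hA₀ hA hne' with h | h
        · exact Set.inter_subset_inter_left _ h
        · have : A ∩ G ⊆ A₀ ∩ G := Set.inter_subset_inter_left _ h
          have := hvmin ⟨A, hA, rfl⟩ this
          exact this
      obtain ⟨A₀, hA₀, rfl⟩ := hvV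
      obtain ⟨y, hy⟩ := (hcS hA₀).2.1 G hG
      refine ⟨y, Set.mem_sInter.2 fun A hA => ?_, hy.2⟩
      exact ((hvleast _ ⟨A, hA, rfl⟩) hy).1
    · intro a ha g hg hga
      exact Set.mem_sInter.2 fun A hA => (hcS hA).2.2 a (Set.mem_sInter.1 ha A hA) g hg hga
  obtain ⟨⟨hMsub, hMad, hMdown⟩, hMmin⟩ := hM
  -- minimality: every m ∈ M dominates M ∩ G for some G
  have hdom : ∀ m ∈ M, ∃ G ∈ 𝒢, ∀ z ∈ M ∩ G, m ≤ z := by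
    intro m hm
    by_contra hcon
    push_neg at hcon
    have hA : (M \ upSet {m}) ∈ S := by
      refine ⟨(Set.diff_subset).trans hMsub, ?_, ?_⟩
      · intro G hG
        obtain ⟨z, hzMG, hmz⟩ := hcon G hG
        refine ⟨z, ⟨hzMG.1, fun hz => ?_⟩, hzMG.2⟩
        obtain ⟨a, ha, haz⟩ := hz
        rw [Set.mem_singleton_iff] at ha
        exact hmz (ha ▸ haz)
      · intro a ha g hg hga
        refine ⟨hMdown a ha.1 g hg hga, fun hgup => ha.2 (upSet_mono' hgup hga)⟩
    have := hMmin hA (Set.diff_subset)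
    have hmem : m ∈ M \ upSet {m} := this hm
    exact hmem.2 (self_mem_upSet rfl)
  refine ⟨M, ?_, ?_, hMsub, hMad⟩
  · obtain ⟨G, hG⟩ := hne
    obtain ⟨y, hy⟩ := hMad G hG
    exact ⟨y, hy.1⟩
  · intro m₁ h₁ m₂ h₂
    obtain ⟨G₁, hG₁, hd₁⟩ := hdom m₁ h₁
    obtain ⟨G₂, hG₂, hd₂⟩ := hdom m₂ h₂
    obtain ⟨H, hH, hHsub⟩ := hdir G₁ hG₁ G₂ hG₂
    obtain ⟨h, hhM, hhH⟩ := hMad H hH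
    have hhup : h ∈ upSet G₁ ∩ upSet G₂ := hHsub (self_mem_upSet hhH)
    obtain ⟨g₁, hg₁, hg₁h⟩ := hhup.1
    obtain ⟨g₂, hg₂, hg₂h⟩ := hhup.2
    have hg₁M : g₁ ∈ M := hMdown h hhM g₁ ⟨G₁, hG₁, hg₁⟩ hg₁h
    have hg₂M : g₂ ∈ M := hMdown h hhM g₂ ⟨G₂, hG₂, hg₂⟩ hg₂h
    exact ⟨h, hhM, (hd₁ g₁ ⟨hg₁M, hg₁⟩).trans hg₁h, (hd₂ g₂ ⟨hg₂M, hg₂⟩).trans hg₂h⟩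

/-- If `x ∈ U ⊆ ↑F` for a `T`-open `U`, and ideal convergence in `T` implies GZS-convergence
(and conversely), then `F ≪ x`. -/
lemma wayBelow_of_open {L : Type u} [PartialOrder L] (T : TopologicalSpace L)
    (hT : ∀ (J : Type u) [Preorder J], IsNetIndex J →
        ∀ (xj : J → L) (I : Set (Set J)), IsIdeal I → ∀ x : L,
          (GZSConv xj I x ↔ IConv T xj I x))
    {U : Set L} {x : L} {F : Set L} (hU : T.IsOpen U) (hxU : x ∈ U)
    (hUF : U ⊆ upSet F) : WayBelowSet F x := by
  intro D hDne hDdir s hs hxs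
  haveI : Nonempty ↥D := hDne.to_subtype
  have hnet : IsNetIndex ↥D := by
    refine ⟨‹_›, fun a b => ?_⟩
    obtain ⟨c, hc, h1, h2⟩ := hDdir a a.2 b b.2
    exact ⟨⟨c, hc⟩, h1, h2⟩
  have hI : IsIdeal (evIdeal ↥D) := evIdeal_isIdeal hnet
  have hgzs : GZSConv (fun d : ↥D => (d : L)) (evIdeal ↥D) x := by
    refine ⟨(fun d : L => ({d} : Set L)) '' D, ⟨hDne.image _, ?_, ?_⟩, ?_, ?_⟩
    · rintro _ ⟨d, hd, rfl⟩
      exact ⟨⟨d, rfl⟩, Set.finite_singleton d⟩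
    · rintro _ ⟨d₁, hd₁, rfl⟩ _ ⟨d₂, hd₂, rfl⟩
      obtain ⟨c, hc, h1, h2⟩ := hDdir d₁ hd₁ d₂ hd₂
      refine ⟨{c}, ⟨c, hc, rfl⟩, fun y hy => ?_⟩
      obtain ⟨a, ha, hay⟩ := hy
      rw [Set.mem_singleton_iff] at ha
      subst ha
      exact ⟨⟨d₁, rfl, h1.trans hay⟩, ⟨d₂, rfl, h2.trans hay⟩⟩
    · intro y hy
      simp only [Set.mem_iInter] at hy
      have hub : y ∈ upperBounds D := by
        intro d hd
        obtain ⟨a, ha, hay⟩ := hy ({d} : Set L) ⟨d, hd, rfl⟩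
        rw [Set.mem_singleton_iff] at ha
        exact ha ▸ hay
      exact ⟨x, rfl, hxs.trans (hs.2 hub)⟩
    · rintro _ ⟨d, hd, rfl⟩
      exact ⟨⟨d, hd⟩, fun j hj hle => hj ⟨d, rfl, hle⟩⟩
  have hic := (hT ↥D hnet _ (evIdeal ↥D) hI x).mp hgzs
  obtain ⟨k, hk⟩ := hic U hU hxU
  have hkU : (k : L) ∈ U := by
    by_contra hkn
    exact hk k hkn le_rfl
  exact ⟨k, k.2, hUF hkU⟩

end AuxLemmas

/-- **Theorem 2 (necessity).** If GZS-convergence on a dcpo is topological, i.e. coincides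
with ideal convergence in some topology, then `L` is a quasicontinuous domain. -/
theorem thm2_necessity {L : Type u} [PartialOrder L] (hL : IsDcpo L)
    (h : ∃ T : TopologicalSpace L, ∀ (J : Type u) [Preorder J], IsNetIndex J →
        ∀ (xj : J → L) (I : Set (Set J)), IsIdeal I → ∀ x : L,
          (GZSConv xj I x ↔ IConv T xj I x)) :
    QuasicontinuousDomain L := by
  classical
  obtain ⟨T, hT⟩ := h
  refine ⟨hL, fun x => ?_⟩
  -- the canonical net: index = pairs (open nbhd U of x, point of U)
  let J : Type u := {p : Set L × L // T.IsOpen p.1 ∧ x ∈ p.1 ∧ p.2 ∈ p.1}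
  let pre : Preorder J :=
    { le := fun p q => q.1.1 ⊆ p.1.1
      lt := fun p q => q.1.1 ⊆ p.1.1 ∧ ¬ p.1.1 ⊆ q.1.1
      le_refl := fun p => Set.Subset.rfl
      le_trans := fun a b c hab hbc z hz => hab (hbc hz)
      lt_iff_le_not_ge := fun a b => Iff.rfl }
  have huniv : T.IsOpen Set.univ := T.isOpen_univ
  have hnet : @IsNetIndex J pre := by
    refine ⟨⟨⟨(Set.univ, x), huniv, Set.mem_univ x, Set.mem_univ x⟩⟩, fun p q => ?_⟩
    refine ⟨⟨(p.1.1 ∩ q.1.1, x), T.isOpen_inter _ _ p.2.1 q.2.1,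
        ⟨p.2.2.1, q.2.2.1⟩, ⟨p.2.2.1, q.2.2.1⟩⟩, Set.inter_subset_left, Set.inter_subset_right⟩
  have hI : IsIdeal (@evIdeal J pre) := @evIdeal_isIdeal J pre hnet
  set xj : J → L := fun p => p.1.2 with hxj
  have hic : IConv T xj (@evIdeal J pre) x := by
    intro U hU hxU
    refine ⟨⟨(U, x), hU, hxU, hxU⟩, fun j hj hkj => ?_⟩
    exact hj (hkj j.2.2.2)
  obtain ⟨ℱ, hℱdir, hℱint, hℱev⟩ := (@hT J pre hnet xj (@evIdeal J pre) hI x).mpr hic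
  -- every member of ℱ has an open neighborhood of x inside its upper set
  have hopen : ∀ F ∈ ℱ, ∃ U, T.IsOpen U ∧ x ∈ U ∧ U ⊆ upSet F := by
    intro F hF
    obtain ⟨k, hk⟩ := hℱev F hF
    refine ⟨k.1.1, k.2.1, k.2.2.1, fun b hb => ?_⟩
    by_contra hbF
    exact hk ⟨(k.1.1, b), k.2.1, k.2.2.1, hb⟩ hbF (fun z hz => hz)
  have hsub : ℱ ⊆ finOf x := by
    intro F hF
    obtain ⟨hFne, hFfin⟩ := hℱdir.2.1 F hF
    obtain ⟨U, hU, hxU, hUF⟩ := hopen F hF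
    exact ⟨hFne, hFfin, wayBelow_of_open T hT hU hxU hUF⟩
  -- key lemma: anything way below x is refined by some member of ℱ
  have hkey : ∀ E ∈ finOf x, ∃ G ∈ ℱ, G ⊆ upSet E := by
    intro E hE
    by_contra hcon
    push_neg at hcon
    have hne' : ∀ G ∈ ℱ, (G \ upSet E).Nonempty :=
      fun G hG => Set.diff_nonempty.2 (hcon G hG)
    obtain ⟨D, hDne, hDdir, hDsub, hDmeet⟩ :=
      rudin_lemma_s12 ((fun G => G \ upSet E) '' ℱ)
        (hℱdir.1.image _)
        (by
          rintro _ ⟨G, hG, rfl⟩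
          exact ⟨hne' G hG, ((hℱdir.2.1 G hG).2).subset Set.diff_subset⟩)
        (by
          rintro _ ⟨G₁, hG₁, rfl⟩ _ ⟨G₂, hG₂, rfl⟩
          obtain ⟨H, hH, hHsub⟩ := hℱdir.2.2 G₁ hG₁ G₂ hG₂
          refine ⟨H \ upSet E, ⟨H, hH, rfl⟩, fun y hy => ?_⟩
          obtain ⟨a, haH, hay⟩ := hy
          have haup := hHsub (self_mem_upSet haH.1)
          obtain ⟨g₁, hg₁, hg₁a⟩ := haup.1
          obtain ⟨g₂, hg₂, hg₂a⟩ := haup.2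
          have hg₁E : g₁ ∉ upSet E := fun hg => haH.2 (upSet_mono' hg hg₁a)
          have hg₂E : g₂ ∉ upSet E := fun hg => haH.2 (upSet_mono' hg hg₂a)
          exact ⟨⟨g₁, ⟨hg₁, hg₁E⟩, hg₁a.trans hay⟩, ⟨g₂, ⟨hg₂, hg₂E⟩, hg₂a.trans hay⟩⟩)
    obtain ⟨s, hs⟩ := hL D hDne hDdir
    have hxs : x ≤ s := by
      have hsint : s ∈ ⋂ F ∈ ℱ, upSet F := by
        simp only [Set.mem_iInter]
        intro F hF
        obtain ⟨d, hdD, hdF⟩ := hDmeet _ ⟨F, hF, rfl⟩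
        exact ⟨d, hdF.1, hs.1 hdD⟩
      obtain ⟨x', hx', hx's⟩ := hℱint hsint
      rw [Set.mem_singleton_iff] at hx'
      exact hx' ▸ hx's
    obtain ⟨d, hdD, hdE⟩ := hE.2.2 D hDne hDdir s hs hxs
    obtain ⟨_, ⟨G, hG, rfl⟩, hd⟩ := hDsub hdD
    exact hd.2 hdE
  constructor
  · -- fin(x) is a directed family
    obtain ⟨F₀, hF₀⟩ := hℱdir.1
    refine ⟨⟨F₀, hsub hF₀⟩, fun F hF => ⟨hF.1, hF.2.1⟩, ?_⟩
    intro E hE F hF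
    obtain ⟨G₁, hG₁, hG₁E⟩ := hkey E hE
    obtain ⟨G₂, hG₂, hG₂F⟩ := hkey F hF
    obtain ⟨H, hH, hHsub⟩ := hℱdir.2.2 G₁ hG₁ G₂ hG₂
    refine ⟨H, hsub hH, fun y hy => ?_⟩
    obtain ⟨hy₁, hy₂⟩ := hHsub hy
    obtain ⟨g₁, hg₁, hg₁y⟩ := hy₁
    obtain ⟨g₂, hg₂, hg₂y⟩ := hy₂
    obtain ⟨e, he, heg⟩ := hG₁E hg₁
    obtain ⟨f, hf, hfg⟩ := hG₂F hg₂
    exact ⟨⟨e, he, heg.trans hg₁y⟩, ⟨f, hf, hfg.trans hg₂y⟩⟩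
  · -- ↑x = ⋂ {↑F : F ∈ fin(x)}
    apply Set.Subset.antisymm
    · intro y hy
      obtain ⟨a, ha, hay⟩ := hy
      rw [Set.mem_singleton_iff] at ha
      replace hay : x ≤ y := ha ▸ hay
      simp only [Set.mem_iInter]
      intro F hF
      have hxF : x ∈ upSet F := by
        obtain ⟨d, hdx, hdF⟩ := hF.2.2 {x} ⟨x, rfl⟩
          (fun a ha b hb => ⟨x, rfl, le_of_eq ha, le_of_eq hb⟩) x isLUB_singleton le_rfl
        rw [Set.mem_singleton_iff] at hdx
        exact hdx ▸ hdF
      exact upSet_mono' hxF hay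
    · intro y hy
      simp only [Set.mem_iInter] at hy
      exact hℱint (Set.mem_iInter₂.2 fun F hF => hy F (hsub hF))
end

section
/- (Example 1) Let L = ℕ ∪ {a, ∞} be the poset with order: x ≤ y if and only if x = y, or y = ∞, or x, y ∈ ℕ with x ≤ y in the natural order (so a is comparable only to itself and ∞). Define the net (x_n)_{n∈ℕ} by x_{2n} = n and x_{2n+1} = a, and let I_0 = {A ⊆ ℕ : ∃ k ∈ ℕ, A ∩ {m : k ≤ m} = ∅}. Then (x_n) GZS-converges to a with respect to I_0, but (x_n) does not IS-converge to a with respect to I_0. -/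
open Set

universe u v

variable {L : Type u}

/-- The poset `L = ℕ ∪ {a, ∞}` of Example 1: `ℕ` with its usual order, `a` comparable only
with itself and `∞`, and `∞` the top element. -/
abbrev ExampleL : Type := WithTop (ℕ ⊕ PUnit)

/-- The point `n ∈ ℕ` inside `ExampleL`. -/
def natPt (n : ℕ) : ExampleL := ((Sum.inl n : ℕ ⊕ PUnit) : ExampleL)

/-- The point `a` of `ExampleL`. -/
def aPt : ExampleL := ((Sum.inr PUnit.unit : ℕ ⊕ PUnit) : ExampleL)

/-- The net with `x_{2n} = n` and `x_{2n+1} = a`. -/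
def xnet (n : ℕ) : ExampleL := if n % 2 = 0 then natPt (n / 2) else aPt

/-- The ideal `I₀ = {A ⊆ ℕ : ∃ k, A ∩ {m : k ≤ m} = ∅}` on `ℕ`. -/
def idealI0 : Set (Set ℕ) := {A | ∃ k : ℕ, A ∩ {m | k ≤ m} = ∅}

/-!
The sets `{a, n}` are eventually above the net (even terms pass `n`, odd terms equal `a`), and
their upper sets shrink to `↑a`, because only `∞` lies above every `n`. An IS-limit, by contrast,
needs a single element `d` eventually below the net, hence below both `a` and some `n`; in `L`
nothing lies below `a` except `a` itself, which is not below any `n`.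
-/

open Filter

theorem setOf_not_mem_idealI0_iff {p : ℕ → Prop} :
    {j | ¬ p j} ∈ idealI0 ↔ ∀ᶠ j in atTop, p j := by
  simp only [idealI0, eventually_atTop, mem_ofPred_eq, eq_empty_iff_forall_notMem, mem_inter_iff,
    not_and, not_imp_not]

section UpSet

variable [Preorder L]

theorem mem_upSet_singleton {x y : L} : y ∈ upSet {x} ↔ x ≤ y := by
  simp [upSet]

theorem mem_upSet_pair {x x' y : L} : y ∈ upSet {x, x'} ↔ x ≤ y ∨ x' ≤ y := by
  simp [upSet]

theorem upSet_pair_subset_of_le {x c c' : L} (h : c ≤ c') : upSet {x, c'} ⊆ upSet {x, c} := by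
  intro y
  simp only [mem_upSet_pair]
  exact Or.imp_right h.trans

theorem directedFamily_range_pair {x : L} {b : ℕ → L} (hb : Monotone b) :
    DirectedFamily (range fun n => ({x, b n} : Set L)) := by
  refine ⟨⟨_, mem_range_self 0⟩, ?_, ?_⟩
  · rintro _ ⟨n, rfl⟩
    exact ⟨insert_nonempty _ _, toFinite _⟩
  · rintro _ ⟨m, rfl⟩ _ ⟨n, rfl⟩
    exact ⟨_, mem_range_self (max m n), subset_inter
      (upSet_pair_subset_of_le (hb (le_max_left m n)))
      (upSet_pair_subset_of_le (hb (le_max_right m n)))⟩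

theorem GZSConv.of_pair_family {J : Type v} {xj : J → L} {I : Set (Set J)} {x : L} {b : ℕ → L}
    (hb : Monotone b) (hbx : upperBounds (range b) ⊆ Ici x)
    (hxj : ∀ n, {j | xj j ∉ upSet {x, b n}} ∈ I) : GZSConv xj I x := by
  refine ⟨_, directedFamily_range_pair (x := x) hb, ?_, ?_⟩
  · intro y hy
    simp only [mem_iInter, mem_range, forall_exists_index, forall_apply_eq_imp_iff,
      mem_upSet_pair] at hy
    rw [mem_upSet_singleton]
    by_contra hxy
    exact hxy (hbx (forall_mem_range.2 fun n => (hy n).resolve_left hxy))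
  · rintro _ ⟨n, rfl⟩
    exact hxj n

theorem ISConv.exists_eventually_le {xj : ℕ → L} {x : L}
    (h : ISConv xj idealI0 x) : ∃ d, ∀ᶠ j in atTop, d ≤ xj j := by
  obtain ⟨D, ⟨d, hd⟩, -, -, hD⟩ := h
  refine ⟨d, setOf_not_mem_idealI0_iff.1 ?_⟩
  simpa only [mem_upSet_singleton] using hD d hd

end UpSet

theorem natPt_le_natPt {m n : ℕ} : natPt m ≤ natPt n ↔ m ≤ n := by
  simp [natPt]

theorem natPt_monotone : Monotone natPt := fun _ _ => natPt_le_natPt.2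

theorem not_aPt_le_natPt (n : ℕ) : ¬ aPt ≤ natPt n := by
  simp [aPt, natPt]

theorem le_aPt_iff {y : ExampleL} : y ≤ aPt ↔ y = aPt := by
  induction y using WithTop.recTopCoe with
  | top => simp [aPt]
  | coe y => rcases y with m | ⟨⟩ <;> simp [aPt]

theorem upperBounds_range_natPt : upperBounds (range natPt) = {⊤} := by
  refine subset_antisymm (fun y hy => ?_) (by simp [upperBounds, le_top])
  induction y using WithTop.recTopCoe with
  | top => rfl
  | coe y =>
    rcases y with m | ⟨⟩
    · exact absurd (hy (mem_range_self (m + 1))) (by simp [natPt])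
    · exact absurd (hy (mem_range_self 0)) (by simp [natPt])

theorem exampleL_le_iff (x y : ExampleL) : x ≤ y ↔ (x = y ∨ y = (⊤ : ExampleL) ∨
    ∃ m n : ℕ, x = natPt m ∧ y = natPt n ∧ m ≤ n) := by
  induction x using WithTop.recTopCoe with
  | top => simp [natPt, eq_comm]
  | coe x =>
    induction y using WithTop.recTopCoe with
    | top => simp
    | coe y => rcases x with m | ⟨⟩ <;> rcases y with n | ⟨⟩ <;> simp +contextual [natPt]

theorem xnet_two_mul (n : ℕ) : xnet (2 * n) = natPt n := by
  simp [xnet]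

theorem xnet_two_mul_add_one (n : ℕ) : xnet (2 * n + 1) = aPt := by
  simp [xnet]

theorem gzsConv_xnet : GZSConv xnet idealI0 aPt := by
  refine GZSConv.of_pair_family natPt_monotone (by simp [upperBounds_range_natPt]) fun n => ?_
  refine setOf_not_mem_idealI0_iff.2 (eventually_atTop.2 ⟨2 * n, fun j hj => ?_⟩)
  rw [mem_upSet_pair]
  obtain ⟨k, rfl | rfl⟩ := Nat.even_or_odd' j
  · exact Or.inr (by rw [xnet_two_mul, natPt_le_natPt]; omega)
  · exact Or.inl (xnet_two_mul_add_one k).ge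

theorem not_isConv_xnet (x : ExampleL) : ¬ ISConv xnet idealI0 x := by
  intro h
  obtain ⟨d, hd⟩ := h.exists_eventually_le
  obtain ⟨k, hk⟩ := eventually_atTop.1 hd
  have hda : d = aPt := le_aPt_iff.1 (xnet_two_mul_add_one k ▸ hk (2 * k + 1) (by omega))
  exact not_aPt_le_natPt k (hda ▸ xnet_two_mul k ▸ hk (2 * k) (by omega))

/-- **Example 1.** In `L = ℕ ∪ {a, ∞}` with the indicated order, the net `(x_n)` with
`x_{2n} = n`, `x_{2n+1} = a` GZS-converges to `a` w.r.t. `I₀`, but does not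
IS-converge to `a` w.r.t. `I₀`. -/
theorem example1 :
    (∀ x y : ExampleL, x ≤ y ↔ (x = y ∨ y = (⊤ : ExampleL) ∨
        ∃ m n : ℕ, x = natPt m ∧ y = natPt n ∧ m ≤ n)) ∧
    GZSConv xnet idealI0 aPt ∧ ¬ ISConv xnet idealI0 aPt :=
  ⟨exampleL_le_iff, gzsConv_xnet, not_isConv_xnet aPt⟩
end
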